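/- arXiv:1404.0077 — 4 statements merged into one kernel-verified Lean document; each statement's English description precedes it below -/
import Mathlib

section
/- If a metric space X without isolated points has a countable nice cover, then X is separable. -/
/-!
Near any point `x` there is a point `y ≠ x`; the cover property at level `0` covers `{x, y}` by
members of the cover of diameter less than `c * d(x, y)`. So every point lies in members of the
cover of arbitrarily small diameter, and one point from each of the countably many members is
a dense set.
-/

open EMetric Set
open scoped ENNReal

/-- A `c`-nice cover of a metric space `X`: a sequence of families `B n` of subsets of `X`
satisfying decreasing monotonicity (finitely many children), increasing monotonicity
(unique ancestors), and the `c`-cover property. -/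
structure NiceCover (X : Type*) [MetricSpace X] (c : ℕ) where
  B : ℕ → Set (Set X)
  finite_children : ∀ n : ℕ, ∀ U ∈ B n, {V | V ∈ B (n + 1) ∧ V ⊆ U}.Finite
  unique_ancestor : ∀ n : ℕ, ∀ U ∈ B n, ∀ m < n, ∃! V, V ∈ B m ∧ U ⊆ V
  ccover : ∀ r : ℕ, ∃ ε : ℝ≥0∞, 0 < ε ∧ ∀ A : Set X,
    0 < EMetric.diam A → EMetric.diam A < ε →
    ∃ 𝒰 : Finset (Set X), 𝒰.card ≤ c ∧
      (∀ U ∈ 𝒰, ∃ n > r, U ∈ B n) ∧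
      A ⊆ ⋃ U ∈ 𝒰, U ∧
      ∀ U ∈ 𝒰, EMetric.diam U < c * EMetric.diam A

theorem exists_ne_edist_lt_of_forall_exists_ne_dist_lt {X : Type*} [PseudoMetricSpace X]
    (hnoiso : ∀ x : X, ∀ ε : ℝ, 0 < ε → ∃ y : X, y ≠ x ∧ dist y x < ε)
    (x : X) {δ : ℝ≥0∞} (hδ : 0 < δ) : ∃ y, y ≠ x ∧ edist y x < δ := by
  obtain ⟨r, -, hr, hrδ⟩ := ENNReal.lt_iff_exists_real_btwn.1 hδ
  obtain ⟨y, hyx, hdist⟩ := hnoiso x r (ENNReal.ofReal_pos.1 hr)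
  refine ⟨y, hyx, lt_trans ?_ hrδ⟩
  rw [edist_dist]
  exact ENNReal.ofReal_lt_ofReal_iff_of_nonneg dist_nonneg |>.2 hdist

theorem separableSpace_of_countable_of_forall_exists_ediam_lt {X : Type*}
    [PseudoEMetricSpace X] {F : Set (Set X)} (hF : F.Countable)
    (hsmall : ∀ x : X, ∀ ε > 0, ∃ U ∈ F, x ∈ U ∧ Metric.ediam U < ε) :
    TopologicalSpace.SeparableSpace X := by
  refine ⟨⟨⋃ U ∈ F, ⋃ h : U.Nonempty, {h.some},
    hF.biUnion fun _ _ => countable_iUnion fun _ => countable_singleton _, fun x => ?_⟩⟩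
  refine EMetric.mem_closure_iff.2 fun ε hε => ?_
  obtain ⟨U, hUF, hxU, hdiam⟩ := hsmall x ε hε
  have hU : U.Nonempty := ⟨x, hxU⟩
  refine ⟨hU.some, mem_biUnion hUF (mem_iUnion_of_mem hU rfl), ?_⟩
  exact (Metric.edist_le_ediam_of_mem hxU hU.some_mem).trans_lt hdiam

namespace NiceCover

variable {X : Type*} [MetricSpace X] {c : ℕ}

theorem exists_mem_ediam_lt (N : NiceCover X c)
    (hnoiso : ∀ x : X, ∀ ε : ℝ, 0 < ε → ∃ y : X, y ≠ x ∧ dist y x < ε)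
    (x : X) {ε : ℝ≥0∞} (hε : 0 < ε) :
    ∃ U ∈ {U : Set X | ∃ n, U ∈ N.B n}, x ∈ U ∧ Metric.ediam U < ε := by
  obtain ⟨ε', hε', hcover⟩ := N.ccover 0
  set δ := min ε' (ε / c)
  have hδ : 0 < δ := lt_min hε' (ENNReal.div_pos hε.ne' (ENNReal.natCast_ne_top c))
  obtain ⟨y, hyx, hy⟩ := exists_ne_edist_lt_of_forall_exists_ne_dist_lt hnoiso x hδ
  have hdiam : Metric.ediam ({x, y} : Set X) = edist y x := by
    rw [Metric.ediam_pair, edist_comm]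
  obtain ⟨𝒰, -, h𝒰B, h𝒰cover, h𝒰diam⟩ := hcover {x, y}
    (hdiam.symm ▸ edist_pos.2 hyx : 0 < Metric.ediam ({x, y} : Set X))
    (hdiam.symm ▸ hy.trans_le (min_le_left _ _) : Metric.ediam ({x, y} : Set X) < ε')
  obtain ⟨U, hU𝒰, hxU⟩ := mem_iUnion₂.1 (h𝒰cover (mem_insert x {y}))
  obtain ⟨n, -, hn⟩ := h𝒰B U hU𝒰
  refine ⟨U, ⟨n, hn⟩, hxU, ?_⟩
  calc Metric.ediam U < c * Metric.ediam ({x, y} : Set X) := h𝒰diam U hU𝒰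
    _ ≤ c * (ε / c) := by rw [hdiam]; gcongr; exact hy.le.trans (min_le_right _ _)
    _ ≤ ε := ENNReal.mul_div_le

end NiceCover

/-- If a metric space `X` without isolated points has a countable nice cover,
then `X` is separable. -/
theorem separable_of_countable_niceCover {X : Type*} [MetricSpace X]
    (hnoiso : ∀ x : X, ∀ ε : ℝ, 0 < ε → ∃ y : X, y ≠ x ∧ dist y x < ε)
    (c : ℕ) (N : NiceCover X c)
    (hcount : Set.Countable {U : Set X | ∃ n, U ∈ N.B n}) :
    TopologicalSpace.SeparableSpace X :=
  separableSpace_of_countable_of_forall_exists_ediam_lt hcount fun x _ hε =>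
    N.exists_mem_ediam_lt hnoiso x hε
end

section
/- Let d be an s-supergale and ℰ ⊆ B a set of pairwise incomparable (with respect to ⊆) elements with d(U)·diam(U) > 0 for all U∈ℰ. Then Σ_{W∈B_0} d(W)·diam(W)^s ≥ Σ_{V∈ℰ} d(V)·diam(V)^s. -/
open Set Filter
open scoped ENNReal NNReal Topology

/-- Membership in the union `B = ∪_n B_n` of a nice cover. -/
def NiceCover.MemB {X : Type*} [MetricSpace X] {c : ℕ} (N : NiceCover X c)
    (U : Set X) : Prop := ∃ n, U ∈ N.B n

/-- An `s`-supergale on a nice cover: a function `d : B → [0,∞)` such that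
`Σ_{U ∈ B_0} d(U)·diam(U)^s < ∞` and for every `n` and `U ∈ B_n`,
`d(U)·diam(U)^s ≥ Σ_{V ∈ B_{n+1}, V ⊆ U} d(V)·diam(V)^s`. -/
def IsSupergale {X : Type*} [MetricSpace X] {c : ℕ} (N : NiceCover X c)
    (s : ℝ) (d : Set X → ℝ≥0) : Prop :=
  (∑' U : N.B 0, (d U : ℝ≥0∞) * EMetric.diam (U : Set X) ^ s) < ∞ ∧
  ∀ n : ℕ, ∀ U ∈ N.B n,
    (∑' V : {V // V ∈ N.B (n + 1) ∧ V ⊆ U},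
        (d V : ℝ≥0∞) * EMetric.diam (V : Set X) ^ s)
      ≤ (d U : ℝ≥0∞) * EMetric.diam U ^ s

/-- `d` succeeds on `x` if some `B`-representation `(w_n)` of `x` satisfies
`limsup_n d(w_n) = ∞`. -/
def Succeeds {X : Type*} [MetricSpace X] {c : ℕ} (N : NiceCover X c)
    (d : Set X → ℝ≥0) (x : X) : Prop :=
  ∃ w : ℕ → Set X, (∀ n, w n ∈ N.B n) ∧ (∀ n, x ∈ w n) ∧
    Filter.atTop.limsup (fun n => (d (w n) : ℝ≥0∞)) = ∞

/-- The success set `S^∞[d]` of `d`. -/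
def SuccessSet {X : Type*} [MetricSpace X] {c : ℕ} (N : NiceCover X c)
    (d : Set X → ℝ≥0) : Set X := {x | Succeeds N d x}

/-!
The supergale inequality only ever moves mass upwards. By induction on depth, an antichain of
descendants of `U ∈ B k` carries at most the mass of `U`: either `U` itself belongs to the
antichain, which is then `{U}`, or every member lies below one of the finitely many children of
`U`, and grouping the members by that child reduces to the induction hypothesis and the supergale
inequality at `U`. A finite part of `ℰ` splits in the same way according to level-`0` ancestors,
and the sum over `ℰ` is the supremum of its finite partial sums.
-/

noncomputable def supergaleMass {X : Type*} [MetricSpace X] (d : Set X → ℝ≥0) (s : ℝ)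
    (V : Set X) : ℝ≥0∞ :=
  d V * Metric.ediam V ^ s

lemma sum_le_tsum_subtype_of_subset {α : Type*} (f : α → ℝ≥0∞) {C : Finset α} {S : Set α}
    (h : (C : Set α) ⊆ S) : ∑ x ∈ C, f x ≤ ∑' x : S, f x :=
  (Finset.tsum_subtype' C f).symm.trans_le (ENNReal.tsum_mono_subtype f h)

namespace NiceCover

variable {X : Type*} [MetricSpace X] {c : ℕ} (N : NiceCover X c)

open Classical in
/-- The level-`k` ancestor of `V ∈ B n`, `k ≤ n`; it is unique by `unique_ancestor` when `k < n`,
and junk when `V` lies in no `B n` with `k ≤ n`. -/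
noncomputable def anc (k : ℕ) (V : Set X) : Set X :=
  if V ∈ N.B k then V
  else if h : ∃ W, W ∈ N.B k ∧ V ⊆ W then h.choose else V

variable {N}

lemma anc_eq_self {k : ℕ} {V : Set X} (h : V ∈ N.B k) : N.anc k V = V := by
  simp [anc, h]

lemma anc_mem_and_subset {k n : ℕ} {V : Set X} (hV : V ∈ N.B n) (hk : k ≤ n) :
    N.anc k V ∈ N.B k ∧ V ⊆ N.anc k V := by
  by_cases h : V ∈ N.B k
  · rw [anc_eq_self h]
    exact ⟨h, subset_rfl⟩
  · have hkn : k < n := lt_of_le_of_ne hk (by rintro rfl; exact h hV)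
    have hex : ∃ W, W ∈ N.B k ∧ V ⊆ W := (N.unique_ancestor n V hV k hkn).exists
    rw [anc, if_neg h, dif_pos hex]
    exact hex.choose_spec

lemma anc_eq_of_subset {k n : ℕ} {V U : Set X} (hV : V ∈ N.B n) (hk : k < n)
    (hU : U ∈ N.B k) (hVU : V ⊆ U) : N.anc k V = U :=
  (N.unique_ancestor n V hV k hk).unique (anc_mem_and_subset hV hk.le) ⟨hU, hVU⟩

lemma anc_anc {k j n : ℕ} {V : Set X} (hV : V ∈ N.B n) (hkj : k ≤ j) (hjn : j ≤ n) :
    N.anc k (N.anc j V) = N.anc k V := by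
  rcases (hkj.trans hjn).lt_or_eq with hkn | rfl
  · obtain ⟨hjB, hVj⟩ := anc_mem_and_subset hV hjn
    obtain ⟨hkB, hjk⟩ := anc_mem_and_subset hjB hkj
    exact (anc_eq_of_subset hV hkn hkB (hVj.trans hjk)).symm
  · obtain rfl : j = k := le_antisymm hjn hkj
    rw [anc_eq_self hV, anc_eq_self hV]

lemma anc_succ_subset {k n : ℕ} {V : Set X} (hV : V ∈ N.B n) (hk : k < n) :
    N.anc (k + 1) V ⊆ N.anc k V := by
  have h := (anc_mem_and_subset (anc_mem_and_subset hV hk).1 k.le_succ).2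
  rwa [anc_anc hV k.le_succ hk] at h

lemma eq_singleton_or_forall_lt_of_anc_eq {k M : ℕ} {U : Set X} {F : Finset (Set X)}
    (hF : IsAntichain (· ⊆ ·) (F : Set (Set X)))
    (hlev : ∀ V ∈ F, ∃ n, k ≤ n ∧ n ≤ M ∧ V ∈ N.B n) (hanc : ∀ V ∈ F, N.anc k V = U) :
    F = {U} ∨ ∀ V ∈ F, ∃ n, k < n ∧ n ≤ M ∧ V ∈ N.B n := by
  by_cases hUF : U ∈ F
  · refine .inl (Finset.eq_singleton_iff_unique_mem.2 ⟨hUF, fun V hV => ?_⟩)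
    obtain ⟨n, hkn, -, hVB⟩ := hlev V hV
    exact hF.eq hV hUF (hanc V hV ▸ (anc_mem_and_subset hVB hkn).2)
  refine .inr fun V hV => ?_
  obtain ⟨n, hkn, hnM, hVB⟩ := hlev V hV
  refine ⟨n, hkn.lt_of_ne ?_, hnM, hVB⟩
  rintro rfl
  exact hUF ((anc_eq_self hVB).symm.trans (hanc V hV) ▸ hV)

end NiceCover

namespace IsSupergale

variable {X : Type*} [MetricSpace X] {c : ℕ} {N : NiceCover X c} {s : ℝ} {d : Set X → ℝ≥0}

lemma sum_children_le (hd : IsSupergale N s d) {k : ℕ} {U : Set X} (hU : U ∈ N.B k)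
    {C : Finset (Set X)} (hC : ∀ W ∈ C, W ∈ N.B (k + 1) ∧ W ⊆ U) :
    ∑ W ∈ C, supergaleMass d s W ≤ supergaleMass d s U :=
  (sum_le_tsum_subtype_of_subset (supergaleMass d s) (S := {V | V ∈ N.B (k + 1) ∧ V ⊆ U})
    hC).trans (hd.2 k U hU)

lemma sum_le_of_anc_eq (hd : IsSupergale N s d) (m : ℕ) {k : ℕ} {U : Set X}
    {F : Finset (Set X)} (hU : U ∈ N.B k) (hF : IsAntichain (· ⊆ ·) (F : Set (Set X)))
    (hlev : ∀ V ∈ F, ∃ n, k ≤ n ∧ n ≤ k + m ∧ V ∈ N.B n) (hanc : ∀ V ∈ F, N.anc k V = U) :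
    ∑ V ∈ F, supergaleMass d s V ≤ supergaleMass d s U := by
  classical
  induction m generalizing k U F with
  | zero =>
    rcases NiceCover.eq_singleton_or_forall_lt_of_anc_eq hF hlev hanc with rfl | hdeep
    · rw [Finset.sum_singleton]
    obtain rfl : F = ∅ := Finset.eq_empty_of_forall_notMem fun V hV => by
      obtain ⟨n, hkn, hnm, -⟩ := hdeep V hV
      omega
    simp
  | succ m ih =>
    rcases NiceCover.eq_singleton_or_forall_lt_of_anc_eq hF hlev hanc with rfl | hdeep
    · rw [Finset.sum_singleton]
    have hchild : ∀ W ∈ F.image (N.anc (k + 1)), W ∈ N.B (k + 1) ∧ W ⊆ U := by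
      simp only [Finset.mem_image]
      rintro W ⟨V, hV, rfl⟩
      obtain ⟨n, hkn, -, hVB⟩ := hdeep V hV
      exact ⟨(NiceCover.anc_mem_and_subset hVB hkn).1,
        hanc V hV ▸ NiceCover.anc_succ_subset hVB hkn⟩
    rw [← Finset.sum_fiberwise_of_maps_to (t := F.image (N.anc (k + 1)))
      (fun V hV => Finset.mem_image_of_mem _ hV)]
    refine (Finset.sum_le_sum fun W hW => ?_).trans (hd.sum_children_le hU hchild)
    refine ih (hchild W hW).1 (hF.subset (Finset.coe_subset.2 (Finset.filter_subset _ _)))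
      (fun V hV => ?_) (fun V hV => (Finset.mem_filter.1 hV).2)
    obtain ⟨n, hkn, hnm, hVB⟩ := hdeep V (Finset.mem_filter.1 hV).1
    exact ⟨n, hkn, by omega, hVB⟩

lemma sum_le_tsum_level_zero (hd : IsSupergale N s d) {F : Finset (Set X)}
    (hF : IsAntichain (· ⊆ ·) (F : Set (Set X))) (hB : ∀ V ∈ F, N.MemB V) :
    ∑ V ∈ F, supergaleMass d s V ≤ ∑' W : N.B 0, supergaleMass d s W := by
  classical
  obtain ⟨M, hM⟩ : ∃ M, ∀ V ∈ F, ∃ n ≤ M, V ∈ N.B n := by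
    choose lvl hlvl using fun V : F => hB V V.2
    exact ⟨Finset.univ.sup lvl, fun V hV =>
      ⟨_, Finset.le_sup (Finset.mem_univ ⟨V, hV⟩), hlvl _⟩⟩
  have hroot : ∀ U ∈ F.image (N.anc 0), U ∈ N.B 0 := by
    simp only [Finset.mem_image]
    rintro U ⟨V, hV, rfl⟩
    obtain ⟨n, -, hVB⟩ := hM V hV
    exact (NiceCover.anc_mem_and_subset hVB n.zero_le).1
  rw [← Finset.sum_fiberwise_of_maps_to (t := F.image (N.anc 0))
    (fun V hV => Finset.mem_image_of_mem _ hV)]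
  refine (Finset.sum_le_sum fun U hU => ?_).trans
    (sum_le_tsum_subtype_of_subset _ fun U hU => hroot U hU)
  refine hd.sum_le_of_anc_eq M (hroot U hU)
    (hF.subset (Finset.coe_subset.2 (Finset.filter_subset _ _)))
    (fun V hV => ?_) (fun V hV => (Finset.mem_filter.1 hV).2)
  obtain ⟨n, hnM, hVB⟩ := hM V (Finset.mem_filter.1 hV).1
  exact ⟨n, n.zero_le, by omega, hVB⟩

end IsSupergale

theorem supergale_incomparable_sum_general {X : Type*} [MetricSpace X] {c : ℕ} (N : NiceCover X c)
    (s : ℝ) (d : Set X → ℝ≥0) (hd : IsSupergale N s d)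
    (ℰ : Set (Set X)) (hℰB : ∀ U ∈ ℰ, N.MemB U)
    (hinc : ∀ U ∈ ℰ, ∀ V ∈ ℰ, U ≠ V → ¬U ⊆ V ∧ ¬V ⊆ U) :
    (∑' V : ℰ, (d V : ℝ≥0∞) * EMetric.diam (V : Set X) ^ s)
      ≤ ∑' W : N.B 0, (d W : ℝ≥0∞) * EMetric.diam (W : Set X) ^ s := by
  have hℰ : IsAntichain (· ⊆ ·) ℰ := fun U hU V hV hUV => (hinc U hU V hV hUV).1
  rw [ENNReal.tsum_eq_iSup_sum]
  refine iSup_le fun F => ?_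
  have hFℰ : (F.map (Function.Embedding.subtype (· ∈ ℰ)) : Set (Set X)) ⊆ ℰ := by
    intro V hV
    obtain ⟨⟨V, hVℰ⟩, -, rfl⟩ := Finset.mem_map.1 hV
    exact hVℰ
  exact (Finset.sum_map F (Function.Embedding.subtype _) (supergaleMass d s)).symm.trans_le
    (hd.sum_le_tsum_level_zero (hℰ.subset hFℰ) fun V hV => hℰB V (hFℰ hV))

/-- For an `s`-supergale `d` and a family `ℰ ⊆ B` of pairwise incomparable sets
with `d(U)·diam(U) > 0` for all `U ∈ ℰ`:
`Σ_{W ∈ B_0} d(W)·diam(W)^s ≥ Σ_{V ∈ ℰ} d(V)·diam(V)^s`. -/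
theorem supergale_incomparable_sum {X : Type*} [MetricSpace X] {c : ℕ} (N : NiceCover X c)
    (s : ℝ) (hs : 0 ≤ s) (d : Set X → ℝ≥0) (hd : IsSupergale N s d)
    (ℰ : Set (Set X)) (hℰB : ∀ U ∈ ℰ, N.MemB U)
    (hinc : ∀ U ∈ ℰ, ∀ V ∈ ℰ, U ≠ V → ¬U ⊆ V ∧ ¬V ⊆ U)
    (hpos : ∀ U ∈ ℰ, 0 < (d U : ℝ≥0∞) * EMetric.diam U) :
    (∑' V : ℰ, (d V : ℝ≥0∞) * EMetric.diam (V : Set X) ^ s)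
      ≤ ∑' W : N.B 0, (d W : ℝ≥0∞) * EMetric.diam (W : Set X) ^ s :=
  supergale_incomparable_sum_general N s d hd ℰ hℰB hinc
end

section
/- Let d be an s-supergale, M = Σ_{W∈B_0} d(W)·diam(W)^s, and for k∈ℕ let C_k = {U∈B : diam(U)>0, d(U) > 2^k·M} and let D_k be the maximal elements of C_k (elements with no proper superset in C_k). Then Σ_{U∈D_k} diam(U)^s ≤ 2^{-k}. -/
open Set Filter
open scoped ENNReal NNReal Topology

/-!
Replacing every element of top level `n + 1` of a finite antichain of the cover tree by its parent
keeps an antichain and, by the supergale inequality at each parent, does not decrease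
`Σ d(U)·diam(U)^s`; descending to level `0` bounds this sum by `M`. The maximal sets `D_k` form
such an antichain with `d(U) > 2^k·M`, so `2^k·M·Σ_{D_k} diam(U)^s ≤ M`.
-/

lemma Finset.sum_comp_le_tsum_subtype {ι α : Type*} {P : Finset ι} {v : ι → α} {S : Set α}
    (hv : Set.InjOn v P) (hS : ∀ i ∈ P, v i ∈ S) (g : α → ℝ≥0∞) :
    ∑ i ∈ P, g (v i) ≤ ∑' x : S, g x := by
  classical
  rw [← Finset.sum_image hv, ← Finset.sum_subtype_of_mem g (p := (· ∈ S))
    (by simpa using hS)]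
  exact ENNReal.sum_le_tsum _

lemma ENNReal.tsum_le_inv_of_mul_lt {ι : Type*} {w d : ι → ℝ≥0∞} {a M : ℝ≥0∞}
    (hM : M ≠ ∞) (hw : ∀ i, w i ≠ 0) (hd : ∀ i, a * M < d i)
    (hsum : ∑' i, d i * w i ≤ M) : ∑' i, w i ≤ a⁻¹ := by
  rcases eq_or_ne M 0 with rfl | hM₀
  · have : IsEmpty ι := ⟨fun i => by
      have := ENNReal.le_tsum i |>.trans hsum
      exact mul_ne_zero (hd i).ne_bot (hw i) (nonpos_iff_eq_zero.mp this)⟩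
    simp
  rw [ENNReal.le_inv_iff_mul_le, ← ENNReal.mul_le_mul_iff_right hM₀ hM, mul_one]
  calc M * ((∑' i, w i) * a) = ∑' i, a * M * w i := by
        rw [ENNReal.tsum_mul_left]; ring
    _ ≤ ∑' i, d i * w i := ENNReal.tsum_le_tsum fun i => mul_le_mul_left (hd i).le _
    _ ≤ M := hsum

namespace NiceCover

variable {X : Type*} [MetricSpace X] {c : ℕ}

open Classical in
noncomputable def parent (N : NiceCover X c) (n : ℕ) (U : Set X) : Set X :=
  if h : U ∈ N.B (n + 1) then (N.unique_ancestor (n + 1) U h n n.lt_succ_self).exists.choose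
  else U

lemma parent_spec {N : NiceCover X c} {n : ℕ} {U : Set X} (h : U ∈ N.B (n + 1)) :
    N.parent n U ∈ N.B n ∧ U ⊆ N.parent n U := by
  rw [parent, dif_pos h]
  exact (N.unique_ancestor (n + 1) U h n n.lt_succ_self).exists.choose_spec

/-- Elements are tagged with a level because a set may lie in several `B n`. -/
structure IsLevelAntichain (N : NiceCover X c) (n : ℕ) (F : Finset (ℕ × Set X)) : Prop where
  fst_le : ∀ p ∈ F, p.1 ≤ n
  mem : ∀ p ∈ F, p.2 ∈ N.B p.1
  not_subset : ∀ p ∈ F, ∀ q ∈ F, p.1 < q.1 → ¬ q.2 ⊆ p.2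

open Classical in
noncomputable def liftTop (N : NiceCover X c) (n : ℕ) (F : Finset (ℕ × Set X)) :
    Finset (ℕ × Set X) :=
  {p ∈ F | p.1 ≠ n + 1} ∪ {p ∈ F | p.1 = n + 1}.image fun p => (n, N.parent n p.2)

variable {N : NiceCover X c} {n : ℕ} {F : Finset (ℕ × Set X)}

lemma mem_liftTop {p : ℕ × Set X} :
    p ∈ N.liftTop n F ↔
      (p ∈ F ∧ p.1 ≠ n + 1) ∨ ∃ q ∈ F, q.1 = n + 1 ∧ (n, N.parent n q.2) = p := by
  classical
  simp [liftTop, and_assoc]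

lemma IsLevelAntichain.not_parent_subset (hF : N.IsLevelAntichain (n + 1) F)
    {p q : ℕ × Set X} (hp : p ∈ F) (hpn : p.1 ≤ n) (hq : q ∈ F) (hqn : q.1 = n + 1) :
    ¬ N.parent n q.2 ⊆ p.2 := fun h =>
  hF.not_subset p hp q hq (by omega) ((parent_spec (hqn ▸ hF.mem q hq)).2.trans h)

lemma IsLevelAntichain.liftTop (hF : N.IsLevelAntichain (n + 1) F) :
    N.IsLevelAntichain n (N.liftTop n F) := by
  have hle : ∀ p ∈ N.liftTop n F, p.1 ≤ n := by
    intro p hp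
    rcases mem_liftTop.mp hp with ⟨hpF, hpn⟩ | ⟨q, -, -, rfl⟩
    · have := hF.fst_le p hpF
      omega
    · exact le_rfl
  refine ⟨hle, fun p hp => ?_, fun p hp q hq hlt => ?_⟩
  · rcases mem_liftTop.mp hp with ⟨hpF, -⟩ | ⟨q, hqF, hqn, rfl⟩
    · exact hF.mem p hpF
    · exact (parent_spec (hqn ▸ hF.mem q hqF)).1
  · have hpF : p ∈ F := by
      rcases mem_liftTop.mp hp with ⟨hpF, -⟩ | ⟨r, -, -, rfl⟩
      · exact hpF
      · exact absurd (hle q hq) (not_le.mpr hlt)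
    rcases mem_liftTop.mp hq with ⟨hqF, -⟩ | ⟨r, hrF, hrn, rfl⟩
    · exact hF.not_subset p hpF q hqF hlt
    · exact hF.not_parent_subset hpF hlt.le hrF hrn

end NiceCover

namespace IsSupergale

open NiceCover

variable {X : Type*} [MetricSpace X] {c : ℕ} {N : NiceCover X c} {s : ℝ} {d : Set X → ℝ≥0}

lemma sum_le_sum_liftTop (hd : IsSupergale N s d) {n : ℕ} {F : Finset (ℕ × Set X)}
    (hF : N.IsLevelAntichain (n + 1) F) :
    ∑ p ∈ F, (d p.2 : ℝ≥0∞) * EMetric.diam p.2 ^ s ≤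
      ∑ p ∈ N.liftTop n F, (d p.2 : ℝ≥0∞) * EMetric.diam p.2 ^ s := by
  classical
  set f : Set X → ℝ≥0∞ := fun U => (d U : ℝ≥0∞) * EMetric.diam U ^ s
  set lift : ℕ × Set X → ℕ × Set X := fun p => (n, N.parent n p.2)
  set top := {p ∈ F | p.1 = n + 1}
  have hdisj : Disjoint {p ∈ F | p.1 ≠ n + 1} (top.image lift) := by
    rw [Finset.disjoint_right]
    intro _ hA hp
    obtain ⟨hpF, -⟩ := Finset.mem_filter.mp hp
    obtain ⟨q, hq, rfl⟩ := Finset.mem_image.mp hA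
    obtain ⟨hqF, hqn⟩ := Finset.mem_filter.mp hq
    exact hF.not_parent_subset hpF le_rfl hqF hqn subset_rfl
  have hfiber : ∀ A ∈ top.image lift, ∑ p ∈ top with lift p = A, f p.2 ≤ f A.2 := by
    intro A hA
    obtain ⟨q, hq, rfl⟩ := Finset.mem_image.mp hA
    obtain ⟨hqF, hqn⟩ := Finset.mem_filter.mp hq
    refine (Finset.sum_comp_le_tsum_subtype (S := {V | V ∈ N.B (n + 1) ∧ V ⊆ N.parent n q.2})
      ?_ ?_ f).trans (hd.2 n _ (parent_spec (hqn ▸ hF.mem q hqF)).1)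
    · intro p hp p' hp' h
      simp only [top, Finset.coe_filter, Finset.mem_filter] at hp hp'
      exact Prod.ext (hp.1.2.trans hp'.1.2.symm) h
    · intro p hp
      simp only [top, lift, Finset.mem_filter, Prod.mk.injEq, true_and] at hp
      obtain ⟨⟨hpF, hpn⟩, hpq⟩ := hp
      exact ⟨hpn ▸ hF.mem p hpF, hpq ▸ (parent_spec (hpn ▸ hF.mem p hpF)).2⟩
  calc ∑ p ∈ F, f p.2 = ∑ p ∈ F with p.1 ≠ n + 1, f p.2 + ∑ p ∈ top, f p.2 :=
        (Finset.sum_filter_not_add_sum_filter F _ _).symm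
    _ ≤ ∑ p ∈ F with p.1 ≠ n + 1, f p.2 + ∑ A ∈ top.image lift, f A.2 := by
        refine add_le_add le_rfl ?_
        rw [← Finset.sum_fiberwise_of_maps_to fun p hp => Finset.mem_image_of_mem lift hp]
        exact Finset.sum_le_sum hfiber
    _ = ∑ p ∈ N.liftTop n F, f p.2 := (Finset.sum_union hdisj).symm

lemma sum_le_of_isLevelAntichain (hd : IsSupergale N s d) (n : ℕ) (F : Finset (ℕ × Set X))
    (hF : N.IsLevelAntichain n F) :
    ∑ p ∈ F, (d p.2 : ℝ≥0∞) * EMetric.diam p.2 ^ s ≤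
      ∑' W : N.B 0, (d W : ℝ≥0∞) * EMetric.diam (W : Set X) ^ s := by
  induction n generalizing F with
  | zero =>
    have hlevel (p) (hp : p ∈ F) : p.1 = 0 := Nat.le_zero.mp (hF.fst_le p hp)
    refine Finset.sum_comp_le_tsum_subtype (v := Prod.snd) (fun p hp q hq h => ?_) (fun p hp => ?_)
      fun U => (d U : ℝ≥0∞) * EMetric.diam U ^ s
    · exact Prod.ext ((hlevel p hp).trans (hlevel q hq).symm) h
    · exact hlevel p hp ▸ hF.mem p hp
  | succ n ih => exact (hd.sum_le_sum_liftTop hF).trans (ih _ hF.liftTop)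

lemma tsum_le_of_isAntichain (hd : IsSupergale N s d) {D : Set (Set X)}
    (hDB : ∀ U ∈ D, N.MemB U) (hD : IsAntichain (· ⊆ ·) D) :
    ∑' U : D, (d U : ℝ≥0∞) * EMetric.diam (U : Set X) ^ s ≤
      ∑' W : N.B 0, (d W : ℝ≥0∞) * EMetric.diam (W : Set X) ^ s := by
  choose ℓ hℓ using fun U : D => hDB U U.2
  refine ENNReal.summable.tsum_le_of_sum_le fun F => ?_
  classical
  let tag : D → ℕ × Set X := fun U => (ℓ U, U)
  have htag : Set.InjOn tag F := fun U _ V _ h => Subtype.ext (congrArg Prod.snd h)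
  rw [← Finset.sum_image (f := fun p => (d p.2 : ℝ≥0∞) * EMetric.diam p.2 ^ s) htag]
  refine hd.sum_le_of_isLevelAntichain (F.sup ℓ) _ ⟨?_, ?_, ?_⟩
  · simp only [Finset.mem_image]
    rintro _ ⟨U, hU, rfl⟩
    exact Finset.le_sup hU
  · simp only [Finset.mem_image]
    rintro _ ⟨U, -, rfl⟩
    exact hℓ U
  · simp only [Finset.mem_image]
    rintro _ ⟨U, -, rfl⟩ _ ⟨V, -, rfl⟩ hlt hVU
    rw [Subtype.ext (hD.eq V.2 U.2 hVU)] at hlt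
    exact lt_irrefl _ hlt

end IsSupergale

/-- Let `d` be an `s`-supergale, `M = Σ_{W ∈ B_0} d(W)·diam(W)^s`,
`C_k = {U ∈ B : diam(U) > 0, d(U) > 2^k·M}` and `D_k` the maximal elements of `C_k`
(those with no proper superset in `C_k`). Then `Σ_{U ∈ D_k} diam(U)^s ≤ 2^{-k}`. -/
theorem supergale_maximal_cover_sum {X : Type*} [MetricSpace X] {c : ℕ} (N : NiceCover X c)
    (s : ℝ) (hs : 0 ≤ s) (d : Set X → ℝ≥0) (hd : IsSupergale N s d) (k : ℕ)
    (M : ℝ≥0∞) (hM : M = ∑' W : N.B 0, (d W : ℝ≥0∞) * EMetric.diam (W : Set X) ^ s)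
    (C D : Set (Set X))
    (hC : C = {U : Set X | N.MemB U ∧ 0 < EMetric.diam U ∧ 2 ^ k * M < (d U : ℝ≥0∞)})
    (hD : D = {U ∈ C | ∀ V ∈ C, U ⊆ V → U = V}) :
    (∑' U : D, EMetric.diam (U : Set X) ^ s) ≤ 2 ^ (-(k : ℤ)) := by
  have hDC : ∀ U ∈ D, N.MemB U ∧ 0 < EMetric.diam U ∧ 2 ^ k * M < (d U : ℝ≥0∞) := by
    rw [hD, hC]
    exact fun U hU => hU.1
  have hanti : IsAntichain (· ⊆ ·) D := fun U hU V hV hne hUV =>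
    hne ((hD ▸ hU).2 V (hD ▸ hV).1 hUV)
  have hmass := hd.tsum_le_of_isAntichain (fun U hU => (hDC U hU).1) hanti
  rw [← hM] at hmass
  rw [ENNReal.zpow_neg, zpow_natCast]
  refine ENNReal.tsum_le_inv_of_mul_lt (hM ▸ hd.1.ne) (fun U => ?_) (fun U => (hDC U U.2).2.2)
    hmass
  exact (ENNReal.rpow_pos_of_nonneg (hDC U U.2).2.1 hs).ne'
end

section
/- If d is an s-supergale and A ⊆ S^∞[d], then dim_H(A) ≤ s. In other words, dim_H(A) ≤ inf Ĝ(A). -/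
open Set Filter
open scoped ENNReal NNReal Topology

/-- The `δ`-approximate `s`-dimensional Hausdorff premeasure of `A`: the infimum of
`Σ_{U ∈ 𝒞} diam(U)^s` over countable covers `𝒞` of `A` by sets of diameter `< δ`. -/
noncomputable def Hδ {X : Type*} [MetricSpace X] (s : ℝ) (δ : ℝ≥0∞) (A : Set X) : ℝ≥0∞ :=
  ⨅ (𝒞 : Set (Set X)) (_ : 𝒞.Countable) (_ : A ⊆ ⋃₀ 𝒞)
    (_ : ∀ U ∈ 𝒞, EMetric.diam U < δ),
    ∑' U : 𝒞, EMetric.diam (U : Set X) ^ s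

/-- The `s`-dimensional Hausdorff measure `H^s(A) = lim_{δ→0} H_δ^s(A)`;
since `H_δ^s(A)` is monotone as `δ → 0`, the limit equals the supremum over `δ > 0`. -/
noncomputable def Hmeas {X : Type*} [MetricSpace X] (s : ℝ) (A : Set X) : ℝ≥0∞ :=
  ⨆ (δ : ℝ≥0∞) (_ : 0 < δ), Hδ s δ A

/-- The Hausdorff dimension of `A`: the infimum of the set of `s ∈ [0,∞)` with
`H^s(A) = 0` (as an extended nonnegative real, `∞` when no such `s` exists). -/
noncomputable def hdim {X : Type*} [MetricSpace X] (A : Set X) : ℝ≥0∞ :=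
  sInf (ENNReal.ofReal '' {s : ℝ | 0 ≤ s ∧ Hmeas s A = 0})

/-
Fix a threshold `k`. Stop each branch of the cover at the first set `U` with `d U ≥ k` and
positive diameter. The supergale inequality makes the total mass `Σ d(U) diam(U)^s` of the
unstopped sets plus the stopped ones non-increasing from level to level, so the stopped family
has total mass at most the initial capital `W = Σ_{U ∈ B₀} d(U) diam(U)^s` (a Kraft inequality).
Every point of `S^∞[d]` lies in a stopped set, so they cover `A`, with `diam(U)^s ≤ W / k` and
`Σ diam(U)^s ≤ W / k`; the cover is countable because positive diameter keeps each mass nonzero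
while the total is finite. Letting `k → ∞` gives `H^s(A) = 0`.
-/

namespace NiceCover

variable {X : Type*} [MetricSpace X] {c : ℕ} (N : NiceCover X c) (P : Set X → Prop)

def Unstopped (n : ℕ) : Set (Set X) :=
  {U | U ∈ N.B n ∧ ∀ m < n, ∀ V ∈ N.B m, U ⊆ V → ¬ P V}

def FirstHit (n : ℕ) : Set (Set X) :=
  {U | U ∈ N.Unstopped P n ∧ P U}

variable {N P}

lemma unstopped_zero : N.Unstopped P 0 = N.B 0 := by
  ext U; simp [Unstopped]

lemma unstopped_succ_subset (n : ℕ) :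
    N.Unstopped P (n + 1) ⊆
      ⋃ V ∈ {V | V ∈ N.Unstopped P n ∧ ¬ P V}, {W | W ∈ N.B (n + 1) ∧ W ⊆ V} := by
  rintro W ⟨hW, hfree⟩
  obtain ⟨V, ⟨hV, hWV⟩, -⟩ := N.unique_ancestor (n + 1) W hW n n.lt_succ_self
  refine mem_biUnion ⟨⟨hV, fun m hm V' hV' hVV' => ?_⟩, hfree n n.lt_succ_self V hV hWV⟩ ⟨hW, hWV⟩
  exact hfree m (hm.trans n.lt_succ_self) V' hV' (hWV.trans hVV')

lemma exists_mem_firstHit {n : ℕ} {U : Set X} (hU : U ∈ N.B n) (hPU : P U) {x : X}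
    (hx : x ∈ U) : ∃ k, ∃ V ∈ N.FirstHit P k, x ∈ V := by
  classical
  have hex : ∃ k, ∃ V ∈ N.B k, U ⊆ V ∧ P V := ⟨n, U, hU, subset_rfl, hPU⟩
  obtain ⟨V, hV, hUV, hPV⟩ := Nat.find_spec hex
  refine ⟨Nat.find hex, V, ⟨⟨hV, fun k hk V' hV' hVV' hPV' => ?_⟩, hPV⟩, hUV hx⟩
  exact Nat.find_min hex hk ⟨V', hV', hUV.trans hVV', hPV'⟩

variable {m : Set X → ℝ≥0∞}
  (hm : ∀ n, ∀ U ∈ N.B n, ∑' V : {V // V ∈ N.B (n + 1) ∧ V ⊆ U}, m V ≤ m U)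
include hm

lemma tsum_firstHit_add_tsum_unstopped_succ_le (n : ℕ) :
    ∑' U : N.FirstHit P n, m U + ∑' U : N.Unstopped P (n + 1), m U ≤
      ∑' U : N.Unstopped P n, m U := by
  have hsplit : N.Unstopped P n = N.FirstHit P n ∪ {V | V ∈ N.Unstopped P n ∧ ¬ P V} := by
    ext V; by_cases hV : P V <;> simp [FirstHit, hV]
  have hdisj : Disjoint (N.FirstHit P n) {V | V ∈ N.Unstopped P n ∧ ¬ P V} :=
    Set.disjoint_left.2 fun V hV hV' => hV'.2 hV.2
  rw [hsplit, ENNReal.summable.tsum_union_disjoint hdisj ENNReal.summable]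
  gcongr
  calc ∑' U : N.Unstopped P (n + 1), m U
      ≤ ∑' U : ⋃ V ∈ {V | V ∈ N.Unstopped P n ∧ ¬ P V}, {W | W ∈ N.B (n + 1) ∧ W ⊆ V}, m U :=
        ENNReal.tsum_mono_subtype m (unstopped_succ_subset n)
    _ ≤ ∑' V : {V | V ∈ N.Unstopped P n ∧ ¬ P V}, ∑' W : {W | W ∈ N.B (n + 1) ∧ W ⊆ V}, m W :=
        ENNReal.tsum_biUnion_le_tsum m _ _
    _ ≤ ∑' V : {V | V ∈ N.Unstopped P n ∧ ¬ P V}, m V :=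
        ENNReal.tsum_le_tsum fun V => hm n V V.2.1.1

lemma sum_tsum_firstHit_add_tsum_unstopped_le (n : ℕ) :
    ∑ k ∈ Finset.range n, ∑' U : N.FirstHit P k, m U + ∑' U : N.Unstopped P n, m U ≤
      ∑' U : N.B 0, m U := by
  induction n with
  | zero => rw [unstopped_zero]; simp
  | succ n ih =>
    rw [Finset.sum_range_succ, add_assoc]
    grw [tsum_firstHit_add_tsum_unstopped_succ_le hm n]
    exact ih

theorem tsum_iUnion_firstHit_le : ∑' U : ⋃ n, N.FirstHit P n, m U ≤ ∑' U : N.B 0, m U := by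
  refine (ENNReal.tsum_iUnion_le_tsum m _).trans ?_
  rw [ENNReal.tsum_eq_iSup_nat]
  exact iSup_le fun n => le_self_add.trans (sum_tsum_firstHit_add_tsum_unstopped_le hm n)

end NiceCover

section

open NiceCover

variable {X : Type*} [MetricSpace X] {c : ℕ} {N : NiceCover X c}

lemma exists_mem_firstHit_of_succeeds {d : Set X → ℝ≥0} {x : X} (hx : Succeeds N d x)
    (k : ℝ≥0) : ∃ n, ∃ U ∈ N.FirstHit (fun U => k ≤ d U ∧ 0 < EMetric.diam U) n, x ∈ U := by
  obtain ⟨w, hwB, hxw, hlim⟩ := hx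
  -- exceeding `d {x}` rules out `w n = {x}`, the only way `w n ∋ x` can have diameter `0`
  obtain ⟨n, hn⟩ : ∃ n, ((max k (d {x}) : ℝ≥0) : ℝ≥0∞) < d (w n) :=
    (frequently_lt_of_lt_limsup (by isBoundedDefault) (hlim ▸ ENNReal.coe_lt_top)).exists
  rw [ENNReal.coe_lt_coe, max_lt_iff] at hn
  have hdiam : 0 < EMetric.diam (w n) :=
    Metric.ediam_pos_iff.2 <| (nontrivial_iff_ne_singleton (hxw n)).2 fun h => by
      rw [h] at hn; exact lt_irrefl _ hn.2
  exact exists_mem_firstHit (hwB n) ⟨hn.1.le, hdiam⟩ (hxw n)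

lemma Hδ_le_tsum {s : ℝ} {δ : ℝ≥0∞} {A : Set X} {𝒞 : Set (Set X)} (h𝒞 : 𝒞.Countable)
    (hA : A ⊆ ⋃₀ 𝒞) (hδ : ∀ U ∈ 𝒞, EMetric.diam U < δ) :
    Hδ s δ A ≤ ∑' U : 𝒞, EMetric.diam (U : Set X) ^ s :=
  iInf_le_of_le 𝒞 <| iInf_le_of_le h𝒞 <| iInf_le_of_le hA <| iInf_le _ hδ

theorem Hδ_le_div_of_supergale {s : ℝ} (hs : 0 ≤ s) {d : Set X → ℝ≥0} (hd : IsSupergale N s d)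
    {A : Set X} (hA : A ⊆ SuccessSet N d) {δ : ℝ≥0∞} {k : ℝ≥0} (hk : k ≠ 0)
    (hδ : (∑' U : N.B 0, (d U : ℝ≥0∞) * EMetric.diam (U : Set X) ^ s) / k < δ ^ s) :
    Hδ s δ A ≤ (∑' U : N.B 0, (d U : ℝ≥0∞) * EMetric.diam (U : Set X) ^ s) / k := by
  set W := ∑' U : N.B 0, (d U : ℝ≥0∞) * EMetric.diam (U : Set X) ^ s
  set mass : Set X → ℝ≥0∞ := fun U => d U * EMetric.diam U ^ s
  set 𝒞 := ⋃ n, N.FirstHit (fun U => k ≤ d U ∧ 0 < EMetric.diam U) n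
  have h𝒞 : ∀ U ∈ 𝒞, k ≤ d U ∧ 0 < EMetric.diam U := fun U hU => by
    obtain ⟨n, hn⟩ := mem_iUnion.1 hU
    exact hn.2
  have hkraft : ∑' U : 𝒞, mass U ≤ W := tsum_iUnion_firstHit_le hd.2
  have hmass_le : ∀ U ∈ 𝒞, mass U ≤ W := fun U hU =>
    (ENNReal.le_tsum (⟨U, hU⟩ : 𝒞)).trans hkraft
  have hpow_le : ∀ U ∈ 𝒞, EMetric.diam U ^ s ≤ mass U / k := fun U hU => by
    rw [ENNReal.le_div_iff_mul_le (Or.inl (by simpa using hk)) (Or.inl ENNReal.coe_ne_top),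
      mul_comm]
    exact mul_le_mul_left (ENNReal.coe_le_coe.2 (h𝒞 U hU).1) _
  have hmass_ne_zero : ∀ U ∈ 𝒞, mass U ≠ 0 := fun U hU =>
    mul_ne_zero (ENNReal.coe_ne_zero.2 ((pos_of_ne_zero hk).trans_le (h𝒞 U hU).1).ne')
      (ENNReal.rpow_pos_of_nonneg (h𝒞 U hU).2 hs).ne'
  have hcount : 𝒞.Countable := by
    have h := Summable.countable_support_ennreal (hkraft.trans_lt hd.1).ne
    rw [Function.support_eq_univ fun U : 𝒞 => hmass_ne_zero U U.2, countable_univ_iff] at h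
    exact countable_coe_iff.1 h
  have hcover : A ⊆ ⋃₀ 𝒞 := fun x hx => by
    obtain ⟨n, U, hU, hxU⟩ := exists_mem_firstHit_of_succeeds (hA hx) k
    exact ⟨U, mem_iUnion.2 ⟨n, hU⟩, hxU⟩
  have hsmall : ∀ U ∈ 𝒞, EMetric.diam U < δ := fun U hU => lt_of_not_ge fun hδU => by
    have : EMetric.diam U ^ s ≤ W / k := (hpow_le U hU).trans (by gcongr; exact hmass_le U hU)
    exact ((ENNReal.rpow_le_rpow hδU hs).trans this).not_gt hδ
  calc Hδ s δ A ≤ ∑' U : 𝒞, EMetric.diam (U : Set X) ^ s := Hδ_le_tsum hcount hcover hsmall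
    _ ≤ ∑' U : 𝒞, mass U / k := ENNReal.tsum_le_tsum fun U => hpow_le U U.2
    _ = (∑' U : 𝒞, mass U) / k := by simp only [div_eq_mul_inv, ENNReal.tsum_mul_right]
    _ ≤ W / k := by gcongr

theorem Hmeas_eq_zero_of_supergale {s : ℝ} (hs : 0 ≤ s) {d : Set X → ℝ≥0}
    (hd : IsSupergale N s d) {A : Set X} (hA : A ⊆ SuccessSet N d) : Hmeas s A = 0 := by
  set W := ∑' U : N.B 0, (d U : ℝ≥0∞) * EMetric.diam (U : Set X) ^ s
  refine nonpos_iff_eq_zero.1 (iSup₂_le fun δ hδ => ?_)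
  have hlim : Tendsto (fun k : ℕ => W / k) atTop (𝓝 0) := by
    simpa [div_eq_mul_inv] using ENNReal.Tendsto.const_mul ENNReal.tendsto_inv_nat_nhds_zero
      (Or.inr hd.1.ne)
  refine ge_of_tendsto hlim ?_
  filter_upwards [hlim.eventually (gt_mem_nhds (ENNReal.rpow_pos_of_nonneg hδ hs)),
    eventually_ne_atTop 0] with k hkδ hk
  simpa using Hδ_le_div_of_supergale hs hd hA (k := k) (by simpa using hk) (by simpa using hkδ)

end

/-- If `d` is an `s`-supergale on a nice cover of `X` and `A ⊆ S^∞[d]`, then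
`dim_H(A) ≤ s`; in other words `dim_H(A) ≤ inf Ĝ(A)`. -/
theorem hdim_le_of_supergale {X : Type*} [MetricSpace X] {c : ℕ} (N : NiceCover X c)
    (s : ℝ) (hs : 0 ≤ s) (d : Set X → ℝ≥0) (hd : IsSupergale N s d)
    (A : Set X) (hA : A ⊆ SuccessSet N d) :
    hdim A ≤ ENNReal.ofReal s :=
  sInf_le ⟨s, ⟨hs, Hmeas_eq_zero_of_supergale hs hd hA⟩, rfl⟩
end
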